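/- arXiv:1409.6142 — 2 statements merged into one kernel-verified Lean document; each statement's English description precedes it below -/
import Mathlib

section
/- Let A = (Q, Σ, δ, ρ) be a Mealy automaton. The semigroup of maps Σ* → Σ* generated under composition by the extended production functions {ρ_x : x ∈ Q} is finite if and only if the semigroup of maps Q* → Q* generated under composition by the extended transition functions {δ_i : i ∈ Σ} of the dual automaton is finite. -/
namespace MealyFormal

variable {Q X : Type*}

/-- Extended transition function of the dual automaton: the action of a letter
`i ∈ Σ` on words over the stateset `Q`, defined by
`δ_i(ε) = ε` and `δ_i(x w) = δ_i(x) δ_{ρ_x(i)}(w)`. -/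
def dExt (δ : X → Q → Q) (ρ : Q → X → X) : X → List Q → List Q
  | _, [] => []
  | i, x :: w => δ i x :: dExt δ ρ (ρ x i) w

/-- The action `δ_s = δ_{s_n} ∘ ⋯ ∘ δ_{s_1}` of a word `s` over `Σ` on words over `Q`. -/
def dWord (δ : X → Q → Q) (ρ : Q → X → X) : List X → List Q → List Q
  | [], u => u
  | i :: s, u => dWord δ ρ s (dExt δ ρ i u)

/-- Extended production function: the action of a state `x ∈ Q` on words over the
alphabet `Σ`, defined by `ρ_x(ε) = ε` and `ρ_x(i s) = ρ_x(i) ρ_{δ_i(x)}(s)`. -/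
def rExt (δ : X → Q → Q) (ρ : Q → X → X) : Q → List X → List X
  | _, [] => []
  | x, i :: s => ρ x i :: rExt δ ρ (δ i x) s

/-- The action `ρ_u = ρ_{x_n} ∘ ⋯ ∘ ρ_{x_1}` of a word `u = x_1⋯x_n` over `Q`
on words over `Σ`. -/
def rWord (δ : X → Q → Q) (ρ : Q → X → X) : List Q → List X → List X
  | [], s => s
  | x :: u, s => rWord δ ρ u (rExt δ ρ x s)

/-- `v` lies in the orbit of `u` under the action of the dual automaton. -/
def InOrbit (δ : X → Q → Q) (ρ : Q → X → X) (u v : List Q) : Prop :=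
  ∃ s : List X, dWord δ ρ s u = v

/-- The orbit (connected component of the corresponding power) of a word over `Q`. -/
def orbit (δ : X → Q → Q) (ρ : Q → X → X) (u : List Q) : Set (List Q) :=
  {v | InOrbit δ ρ u v}

/-- The action of the dual automaton on `Q^n` is transitive, i.e. `A^n` is connected. -/
def LevelTransitive (δ : X → Q → Q) (ρ : Q → X → X) (n : ℕ) : Prop :=
  ∀ u v : List Q, u.length = n → v.length = n → InOrbit δ ρ u v

/-- The label `ℓ(u x)` of the nonempty word `u x`:
the number of `z ∈ Q` with `u z` in the orbit of `u x`. -/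
noncomputable def label (δ : X → Q → Q) (ρ : Q → X → X) (u : List Q) (x : Q) : ℕ :=
  Set.ncard {z : Q | InOrbit δ ρ (u ++ [x]) (u ++ [z])}

/-- Prefix of length `i` of the (infinite) word `w = w_1 w_2 ⋯`. -/
def pref (w : ℕ → Q) (i : ℕ) : List Q := (List.range i).map w

/-- The `n`-th power `u^n` of a word `u`. -/
def wpow (u : List Q) (n : ℕ) : List Q := (List.replicate n u).flatten

/-- The group generated by the Mealy automaton: the subgroup of permutations of `Σ*`
generated by the production functions `ρ_x`, `x ∈ Q`. -/
def autGroup (δ : X → Q → Q) (ρ : Q → X → X) : Subgroup (Equiv.Perm (List X)) :=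
  Subgroup.closure {π : Equiv.Perm (List X) | ∃ q : Q, ⇑π = rExt δ ρ q}

/-- The semigroup of maps `Σ* → Σ*` generated under composition by the `ρ_x`, `x ∈ Q`. -/
def prodSemigroup (δ : X → Q → Q) (ρ : Q → X → X) :
    Subsemigroup (Function.End (List X)) :=
  Subsemigroup.closure {f : Function.End (List X) | ∃ q : Q, f = rExt δ ρ q}

/-- The semigroup of maps `Q* → Q*` generated under composition by the `δ_i`, `i ∈ Σ`. -/
def dualSemigroup (δ : X → Q → Q) (ρ : Q → X → X) :
    Subsemigroup (Function.End (List Q)) :=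
  Subsemigroup.closure {f : Function.End (List Q) | ∃ i : X, f = dExt δ ρ i}

/-- A word `w` over `Q` is orbital if all its factors of length `c+1`
belong to the reduction orbit `O2`. -/
def Orbital (c : ℕ) (O2 : Set (List Q)) (w : List Q) : Prop :=
  ∀ f : List Q, f.length = c + 1 → f <:+: w → f ∈ O2

/-- A word is cyclically orbital if each of its powers is orbital. -/
def CycOrbital (c : ℕ) (O2 : Set (List Q)) (w : List Q) : Prop :=
  ∀ n : ℕ, Orbital c O2 (wpow w n)

/-- The standing setup: `A` is a connected invertible-reversible Mealy automaton
with 3 states, `0 < c = cd(A) < ∞`, and `Q^{c+1}` splits into exactly two orbits,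
of sizes `2·3^c` and `3^c`; `O2` is the reduction orbit, of size `2·3^c`. -/
structure StandingSetup (δ : X → Q → Q) (ρ : Q → X → X) (c : ℕ) (O2 : Set (List Q)) :
    Prop where
  card_three : Nat.card Q = 3
  invertible : ∀ q : Q, Function.Bijective (ρ q)
  reversible : ∀ i : X, Function.Bijective (δ i)
  connected : LevelTransitive δ ρ 1
  c_pos : 0 < c
  trans_c : LevelTransitive δ ρ c
  not_trans_succ : ¬ LevelTransitive δ ρ (c + 1)
  O2_is_orbit : ∃ w : List Q, w.length = c + 1 ∧ O2 = orbit δ ρ w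
  O2_card : O2.ncard = 2 * 3 ^ c
  other_is_orbit : ∃ w : List Q, w.length = c + 1 ∧
    orbit δ ρ w = {v : List Q | v.length = c + 1} \ O2
  other_card : ({v : List Q | v.length = c + 1} \ O2).ncard = 3 ^ c


section Aux

variable (δ : X → Q → Q) (ρ : Q → X → X)

/-- Letter action of a word over `Q` on a single letter of `X`. -/
def piF : List Q → X → X
  | [], i => i
  | x :: u, i => piF u (ρ x i)

/-- State reached from `x` after reading the word `s`. -/
def qrF : List X → Q → Q
  | [], x => x
  | j :: s, x => qrF s (δ j x)

lemma rExt_nil (x : Q) : rExt δ ρ x [] = [] := rfl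

lemma rWord_nil : ∀ u : List Q, rWord δ ρ u [] = []
  | [] => rfl
  | _ :: u => by rw [rWord, rExt_nil, rWord_nil]

lemma dExt_nil (i : X) : dExt δ ρ i [] = [] := rfl

lemma dWord_nil : ∀ s : List X, dWord δ ρ s [] = []
  | [] => rfl
  | _ :: s => by rw [dWord, dExt_nil, dWord_nil]

lemma rExt_concat : ∀ (s : List X) (x : Q) (i : X),
    rExt δ ρ x (s ++ [i]) = rExt δ ρ x s ++ [ρ (qrF δ s x) i]
  | [], x, i => rfl
  | j :: s, x, i => by
    simp only [List.cons_append, rExt, qrF, rExt_concat s, List.append_eq]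

lemma dWord_cons : ∀ (s : List X) (x : Q) (w : List Q),
    dWord δ ρ s (x :: w) = qrF δ s x :: dWord δ ρ (rExt δ ρ x s) w
  | [], x, w => rfl
  | j :: s, x, w => by
    simp only [dWord, dExt, qrF, rExt, dWord_cons s]

lemma rWord_concat : ∀ (u : List Q) (s : List X) (i : X),
    rWord δ ρ u (s ++ [i]) = rWord δ ρ u s ++ [piF ρ (dWord δ ρ s u) i]
  | [], s, i => by rw [rWord, rWord, dWord_nil]; rfl
  | x :: u, s, i => by
    rw [rWord, rExt_concat, rWord_concat u, rWord, dWord_cons]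
    rfl

/-- A production function `ρ_u` is determined by the letter actions of the
images of `u` under the dual action. -/
lemma rWord_ext (u v : List Q)
    (h : ∀ s : List X, piF ρ (dWord δ ρ s u) = piF ρ (dWord δ ρ s v)) :
    rWord δ ρ u = rWord δ ρ v := by
  funext s
  induction s using List.reverseRecOn with
  | nil => rw [rWord_nil, rWord_nil]
  | append_singleton s i ih => rw [rWord_concat, rWord_concat, ih, h s]

lemma rWord_append : ∀ (u v : List Q) (s : List X),
    rWord δ ρ (u ++ v) s = rWord δ ρ v (rWord δ ρ u s)
  | [], v, s => rfl
  | x :: u, v, s => by rw [List.cons_append, rWord, rWord, rWord_append u]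

lemma dExt_eq_rExt : dExt δ ρ = rExt ρ δ := by
  funext i w
  induction w generalizing i with
  | nil => rfl
  | cons x w ih => rw [dExt, rExt, ih]

lemma dWord_eq_rWord : dWord δ ρ = rWord ρ δ := by
  funext s u
  induction s generalizing u with
  | nil => rfl
  | cons i s ih => rw [dWord, rWord, ih, dExt_eq_rExt]

lemma dualSemigroup_eq : dualSemigroup δ ρ = prodSemigroup ρ δ := by
  unfold dualSemigroup prodSemigroup
  rw [dExt_eq_rExt]

lemma prodSemigroup_eq : prodSemigroup δ ρ = dualSemigroup ρ δ := by
  unfold dualSemigroup prodSemigroup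
  rw [dExt_eq_rExt]

lemma dWord_mem_dualSemigroup : ∀ (s : List X) (i : X),
    (dWord δ ρ (i :: s) : Function.End (List Q)) ∈ dualSemigroup δ ρ
  | [], i => by
    apply Subsemigroup.subset_closure
    exact ⟨i, rfl⟩
  | j :: s, i => by
    let a : Function.End (List Q) := dWord δ ρ (j :: s)
    let b : Function.End (List Q) := dExt δ ρ i
    have hab : a * b ∈ dualSemigroup δ ρ :=
      mul_mem (dWord_mem_dualSemigroup s j) (Subsemigroup.subset_closure ⟨i, rfl⟩)
    have h1 : (dWord δ ρ (i :: j :: s) : Function.End (List Q)) = a * b := by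
      funext u; rfl
    rw [h1]
    exact hab

/-- The set of all extended production functions (over all words, including the
empty word) as a subsemigroup. -/
def rWordSemigroup : Subsemigroup (Function.End (List X)) where
  carrier := {f | ∃ u : List Q, f = rWord δ ρ u}
  mul_mem' := by
    rintro f g ⟨u, rfl⟩ ⟨v, rfl⟩
    refine ⟨v ++ u, ?_⟩
    funext s
    exact (rWord_append δ ρ v u s).symm

lemma finite_prod_of_finite_dual [Finite Q] [Finite X]
    (h : Finite ↥(dualSemigroup δ ρ)) : Finite ↥(prodSemigroup δ ρ) := by
  classical
  -- the set of all dual word actions is finite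
  set D : Set (List Q → List Q) := {f | ∃ s : List X, f = dWord δ ρ s} with hD
  have hDfin : D.Finite := by
    have hsub : D ⊆ insert (id : List Q → List Q)
        ((dualSemigroup δ ρ : Set (Function.End (List Q))) :
          Set (List Q → List Q)) := by
      rintro f ⟨s, rfl⟩
      cases s with
      | nil => exact Set.mem_insert _ _
      | cons i s => exact Set.mem_insert_of_mem _ (dWord_mem_dualSemigroup δ ρ s i)
    exact (Set.Finite.insert _ ((dualSemigroup δ ρ : Set (Function.End (List Q))).toFinite)).subset hsub
  haveI := hDfin.to_subtype
  -- the set of all production word actions is finite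
  set R : Set (List X → List X) := {f | ∃ u : List Q, f = rWord δ ρ u} with hR
  have hRfin : R.Finite := by
    haveI : Finite (↥D → X → X) := Pi.finite
    set Φ : List Q → (↥D → X → X) := fun u f => piF ρ (f.1 u) with hΦ
    have key : ∀ u v : List Q, Φ u = Φ v → rWord δ ρ u = rWord δ ρ v := by
      intro u v huv
      apply rWord_ext
      intro s
      have := congrFun huv ⟨dWord δ ρ s, ⟨s, rfl⟩⟩
      exact this
    haveI : Finite ↥R := by
      apply Finite.of_injective
        (fun f : ↥R => Φ f.2.choose)
      rintro ⟨f, hf⟩ ⟨g, hg⟩ hfg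
      have h1 : f = rWord δ ρ hf.choose := hf.choose_spec
      have h2 : g = rWord δ ρ hg.choose := hg.choose_spec
      apply Subtype.ext
      show f = g
      rw [h1, h2]
      exact key _ _ hfg
    exact Set.toFinite R
  -- the product semigroup is contained in R
  have hle : prodSemigroup δ ρ ≤ rWordSemigroup δ ρ := by
    apply Subsemigroup.closure_le.mpr
    rintro f ⟨q, rfl⟩
    exact ⟨[q], rfl⟩
  have hsub : (prodSemigroup δ ρ : Set (Function.End (List X))) ⊆ R := by
    intro f hf
    exact hle hf
  exact (hRfin.subset hsub).to_subtype

end Aux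

/-- A Mealy automaton generates a finite semigroup if and only if
so does its dual. -/
theorem semigroup_finite_iff_dual_semigroup_finite
    {Q X : Type*} [Finite Q] [Finite X] [Nonempty Q] [Nonempty X]
    (δ : X → Q → Q) (ρ : Q → X → X) :
    Finite ↥(prodSemigroup δ ρ) ↔ Finite ↥(dualSemigroup δ ρ) := by
  constructor
  · intro h
    rw [dualSemigroup_eq]
    rw [prodSemigroup_eq] at h
    exact finite_prod_of_finite_dual ρ δ h
  · intro h
    exact finite_prod_of_finite_dual δ ρ h

end MealyFormal
end

section
/- Let A = (Q, Σ, δ, ρ) be an invertible-reversible Mealy automaton. Let u ∈ Q^m, x ∈ Q, and let w = w' a ∈ Q^{n+1} with w' ∈ Q^n, a ∈ Q, and m ≤ n. Suppose every word in the orbit of w in Q^{n+1} has its suffix of length m+1 in the orbit of u x in Q^{m+1}. Then #{z ∈ Q : w' z lies in the orbit of w} ≤ #{z ∈ Q : u z lies in the orbit of u x}. (If an edge of the orbit tree is liftable to another, its label is less than or equal to the label of the other.) -/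
namespace MealyFormal

variable {Q X : Type*}

section Aux

variable (δ : X → Q → Q) (ρ : Q → X → X)

/-- The letter obtained from `i` after processing the word `p`. -/
def rho1 (ρ : Q → X → X) : List Q → X → X
  | [], i => i
  | x :: p, i => rho1 ρ p (ρ x i)

/-- The word over `Σ` acting on a second block after `t` has processed `p`. -/
def tshift (δ : X → Q → Q) (ρ : Q → X → X) : List X → List Q → List X
  | [], _ => []
  | i :: t, p => rho1 ρ p i :: tshift δ ρ t (dExt δ ρ i p)

lemma dExt_append (i : X) (p q : List Q) :
    dExt δ ρ i (p ++ q) = dExt δ ρ i p ++ dExt δ ρ (rho1 ρ p i) q := by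
  induction p generalizing i with
  | nil => simp [dExt, rho1]
  | cons x p ih => simp [dExt, rho1, ih]

lemma dWord_append_list (t : List X) (p q : List Q) :
    dWord δ ρ t (p ++ q) = dWord δ ρ t p ++ dWord δ ρ (tshift δ ρ t p) q := by
  induction t generalizing p q with
  | nil => simp [dWord, tshift]
  | cons i t ih => simp [dWord, tshift, dExt_append, ih]

lemma dExt_length (i : X) (v : List Q) : (dExt δ ρ i v).length = v.length := by
  induction v generalizing i with
  | nil => simp [dExt]
  | cons x v ih => simp [dExt, ih]

lemma dWord_length (t : List X) (v : List Q) : (dWord δ ρ t v).length = v.length := by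
  induction t generalizing v with
  | nil => simp [dWord]
  | cons i t ih => simp [dWord, ih, dExt_length]

lemma dWord_append_word (s t : List X) (v : List Q) :
    dWord δ ρ (s ++ t) v = dWord δ ρ t (dWord δ ρ s v) := by
  induction s generalizing v with
  | nil => simp [dWord]
  | cons i s ih => simp [dWord, ih]

variable (hrev : ∀ i : X, Function.Bijective (δ i))

include hrev in
lemma dExt_inj (i : X) : Function.Injective (dExt δ ρ i) := by
  intro v w h
  induction v generalizing i w with
  | nil => cases w <;> simp_all [dExt]
  | cons x v ih =>
    cases w with
    | nil => simp [dExt] at h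
    | cons y w =>
      simp only [dExt, List.cons.injEq] at h
      obtain ⟨h1, h2⟩ := h
      have hx : x = y := (hrev i).1 h1
      subst hx
      rw [ih _ h2]

include hrev in
lemma dWord_inj (t : List X) : Function.Injective (dWord δ ρ t) := by
  induction t with
  | nil => intro v w h; exact h
  | cons i t ih => intro v w h; exact dExt_inj δ ρ hrev i (ih h)

include hrev in
lemma exists_dExt_inverse (i : X) (v : List Q) [Finite Q] :
    ∃ t, dWord δ ρ t (dExt δ ρ i v) = v := by
  classical
  set n := v.length with hn
  have hfin : Finite {l : List Q // l.length = n} :=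
    (List.finite_length_eq Q n).to_subtype
  set F : {l : List Q // l.length = n} → {l : List Q // l.length = n} :=
    fun l => ⟨dExt δ ρ i l.1, by rw [dExt_length, l.2]⟩ with hF
  have hFval : ∀ (m : ℕ) (l : {l : List Q // l.length = n}),
      (F^[m] l).1 = (dExt δ ρ i)^[m] l.1 := by
    intro m
    induction m with
    | zero => intro l; rfl
    | succ m ih =>
      intro l
      rw [Function.iterate_succ_apply, Function.iterate_succ_apply, ih]
  have hFinj : Function.Injective F := by
    intro a b h
    exact Subtype.ext (dExt_inj δ ρ hrev i (congrArg Subtype.val h))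
  obtain ⟨j, k, hjk, heq⟩ :=
    Finite.exists_ne_map_eq_of_infinite (fun m : ℕ => F^[m] (⟨v, rfl⟩ : {l : List Q // l.length = n}))
  -- WLOG j < k
  have key : ∀ j k : ℕ, j < k →
      F^[j] (⟨v, rfl⟩ : {l : List Q // l.length = n}) = F^[k] ⟨v, rfl⟩ →
      ∃ t, dWord δ ρ t (dExt δ ρ i v) = v := by
    intro j k hlt he
    obtain ⟨d, rfl⟩ : ∃ d, k = j + d := ⟨k - j, by omega⟩
    have hd : 0 < d := by omega
    rw [Function.iterate_add_apply] at he
    have hfix : F^[d] (⟨v, rfl⟩ : {l : List Q // l.length = n}) = ⟨v, rfl⟩ :=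
      ((hFinj.iterate j) he.symm)
    refine ⟨List.replicate (d - 1) i, ?_⟩
    have hrep : ∀ (m : ℕ) (w : List Q),
        dWord δ ρ (List.replicate m i) w = (dExt δ ρ i)^[m] w := by
      intro m
      induction m with
      | zero => intro w; rfl
      | succ m ih =>
        intro w
        rw [List.replicate_succ]
        show dWord δ ρ (List.replicate m i) (dExt δ ρ i w) = _
        rw [ih, ← Function.iterate_succ_apply]
    rw [hrep, ← Function.iterate_succ_apply, Nat.succ_eq_add_one]
    have : d - 1 + 1 = d := by omega
    rw [this]
    have := congrArg Subtype.val hfix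
    rw [hFval] at this
    exact this
  rcases lt_or_gt_of_ne hjk with h | h
  · exact key j k h heq
  · exact key k j h heq.symm

include hrev in
lemma exists_dWord_inverse (t : List X) (v : List Q) [Finite Q] :
    ∃ t2, dWord δ ρ t2 (dWord δ ρ t v) = v := by
  induction t generalizing v with
  | nil => exact ⟨[], rfl⟩
  | cons i t ih =>
    obtain ⟨t2, h2⟩ := ih (dExt δ ρ i v)
    obtain ⟨t3, h3⟩ := exists_dExt_inverse δ ρ hrev i v
    refine ⟨t2 ++ t3, ?_⟩
    rw [dWord_append_word]
    show dWord δ ρ t3 (dWord δ ρ t2 (dWord δ ρ t (dExt δ ρ i v))) = v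
    rw [h2, h3]

lemma dWord_singleton (t : List X) (z : Q) : ∃ y, dWord δ ρ t [z] = [y] := by
  have h := dWord_length δ ρ t [z]
  simp only [List.length_singleton] at h
  exact List.length_eq_one_iff.1 h

end Aux

/-- If the edge of the orbit tree determined by `w = w' ++ [a]` is
liftable to the edge determined by `u ++ [x]` (every word of the orbit of `w`
has its suffix of length `|u| + 1` in the orbit of `u ++ [x]`), then
`ℓ(w' a) ≤ ℓ(u x)`. -/
theorem liftable_label_le
    {Q X : Type*} [Finite Q] [Finite X] [Nonempty Q] [Nonempty X]
    (δ : X → Q → Q) (ρ : Q → X → X)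
    (hinv : ∀ q : Q, Function.Bijective (ρ q))
    (hrev : ∀ i : X, Function.Bijective (δ i))
    (u w' : List Q) (x a : Q) (hlen : u.length ≤ w'.length)
    (hlift : ∀ v : List Q, InOrbit δ ρ (w' ++ [a]) v →
      InOrbit δ ρ (u ++ [x]) (v.drop (v.length - (u.length + 1)))) :
    label δ ρ w' a ≤ label δ ρ u x := by
  classical
  set m := u.length with hm
  set s : List Q := w'.drop (w'.length - m) with hs
  have hslen : s.length = m := by
    rw [hs, List.length_drop]; omega
  -- drop computation
  have hdrop : ∀ z : Q,
      (w' ++ [z]).drop ((w' ++ [z]).length - (m + 1)) = s ++ [z] := by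
    intro z
    have h1 : (w' ++ [z]).length - (m + 1) = w'.length - m := by
      simp [List.length_append]
    rw [h1, List.drop_append_of_le_length (by omega)]
  -- the suffix of w' ++ [a] lies in the orbit of u ++ [x]
  have hsa : InOrbit δ ρ (u ++ [x]) (s ++ [a]) := by
    have h := hlift (w' ++ [a]) ⟨[], rfl⟩
    rwa [hdrop a] at h
  obtain ⟨t, ht⟩ := hsa
  have ht' := ht
  rw [dWord_append_list] at ht'
  have htu : dWord δ ρ t u = s := by
    have hl : (dWord δ ρ t u).length = s.length := by
      rw [dWord_length, hslen]
    exact (List.append_inj ht' hl).1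
  -- inverse word t2
  obtain ⟨t2, ht2⟩ := exists_dWord_inverse δ ρ hrev t (u ++ [x])
  rw [ht] at ht2
  have ht2' := ht2
  rw [dWord_append_list] at ht2'
  have ht2u : dWord δ ρ t2 s = u := by
    have hl : (dWord δ ρ t2 s).length = u.length := by
      rw [dWord_length, hslen]
    exact (List.append_inj ht2' hl).1
  -- the map ψ
  set ψ : Q → Q := fun z => Classical.choose (dWord_singleton δ ρ (tshift δ ρ t2 s) z)
    with hψ
  have hψspec : ∀ z : Q, dWord δ ρ (tshift δ ρ t2 s) [z] = [ψ z] := fun z =>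
    Classical.choose_spec (dWord_singleton δ ρ (tshift δ ρ t2 s) z)
  have hψim : ∀ z : Q, dWord δ ρ t2 (s ++ [z]) = u ++ [ψ z] := by
    intro z
    rw [dWord_append_list, ht2u, hψspec]
  have hψinj : Function.Injective ψ := by
    intro z z' h
    have : dWord δ ρ t2 (s ++ [z]) = dWord δ ρ t2 (s ++ [z']) := by
      rw [hψim, hψim, h]
    have := dWord_inj δ ρ hrev t2 this
    have := List.append_cancel_left this
    simpa using this
  -- the three sets
  have hsub : {z : Q | InOrbit δ ρ (w' ++ [a]) (w' ++ [z])} ⊆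
      {z : Q | InOrbit δ ρ (u ++ [x]) (s ++ [z])} := by
    intro z hz
    have h := hlift (w' ++ [z]) hz
    rwa [hdrop z] at h
  have hmap : ∀ z ∈ {z : Q | InOrbit δ ρ (u ++ [x]) (s ++ [z])},
      ψ z ∈ {z : Q | InOrbit δ ρ (u ++ [x]) (u ++ [z])} := by
    intro z hz
    obtain ⟨s1, hs1⟩ := hz
    exact ⟨s1 ++ t2, by rw [dWord_append_word, hs1, hψim]⟩
  calc label δ ρ w' a
      = ({z : Q | InOrbit δ ρ (w' ++ [a]) (w' ++ [z])}).ncard := rfl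
    _ ≤ ({z : Q | InOrbit δ ρ (u ++ [x]) (s ++ [z])}).ncard :=
        Set.ncard_le_ncard hsub (Set.toFinite _)
    _ ≤ ({z : Q | InOrbit δ ρ (u ++ [x]) (u ++ [z])}).ncard :=
        Set.ncard_le_ncard_of_injOn ψ hmap (hψinj.injOn) (Set.toFinite _)
    _ = label δ ρ u x := rfl

end MealyFormal
end
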